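/- arXiv:1507.00317 — 9 statements merged into one kernel-verified Lean document; each statement's English description precedes it below -/
import Mathlib

section
/- Let V be a finite set, let k be a positive integer with k ≤ |V|, and let μ, σ, ν : 2^V → ℝ satisfy 0 ≤ μ(S) ≤ σ(S) ≤ ν(S) for every S ⊆ V. Let S*_σ, S*_μ, S*_ν be maximizers of σ, μ, ν respectively over all subsets of V of size k. Let S_σ, S_μ, S_ν be subsets of V of size k such that μ(S_μ) ≥ (1 − 1/e)·μ(S*_μ) and ν(S_ν) ≥ (1 − 1/e)·ν(S*_ν), and let S_sand be any set among {S_μ, S_σ, S_ν} attaining the maximum of σ over these three sets. If ν(S_ν) > 0 and σ(S*_σ) > 0, then σ(S_sand) ≥ max{ σ(S_ν)/ν(S_ν), μ(S*_σ)/σ(S*_σ) } · (1 − 1/e) · σ(S*_σ). -/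
/-- Sandwich Approximation theorem (Theorem 8). -/
theorem sandwich_approximation
    {V : Type*} [Fintype V] [DecidableEq V]
    (k : ℕ) (hk : 0 < k) (hkV : k ≤ Fintype.card V)
    (μ σ ν : Finset V → ℝ)
    (hμ0 : ∀ S : Finset V, 0 ≤ μ S)
    (hμσ : ∀ S : Finset V, μ S ≤ σ S)
    (hσν : ∀ S : Finset V, σ S ≤ ν S)
    (Sσstar Sμstar Sνstar : Finset V)
    (hSσstar_card : Sσstar.card = k)
    (hSσstar_max : ∀ T : Finset V, T.card = k → σ T ≤ σ Sσstar)
    (hSμstar_card : Sμstar.card = k)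
    (hSμstar_max : ∀ T : Finset V, T.card = k → μ T ≤ μ Sμstar)
    (hSνstar_card : Sνstar.card = k)
    (hSνstar_max : ∀ T : Finset V, T.card = k → ν T ≤ ν Sνstar)
    (Sσ Sμ Sν : Finset V)
    (hSσ_card : Sσ.card = k) (hSμ_card : Sμ.card = k) (hSν_card : Sν.card = k)
    (hSμ_approx : (1 - 1 / Real.exp 1) * μ Sμstar ≤ μ Sμ)
    (hSν_approx : (1 - 1 / Real.exp 1) * ν Sνstar ≤ ν Sν)
    (Ssand : Finset V)
    (hSsand_mem : Ssand = Sμ ∨ Ssand = Sσ ∨ Ssand = Sν)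
    (hSsand_max : σ Sμ ≤ σ Ssand ∧ σ Sσ ≤ σ Ssand ∧ σ Sν ≤ σ Ssand)
    (hν_pos : 0 < ν Sν) (hσ_pos : 0 < σ Sσstar) :
    max (σ Sν / ν Sν) (μ Sσstar / σ Sσstar) * ((1 - 1 / Real.exp 1) * σ Sσstar)
      ≤ σ Ssand := by
  have he : (0:ℝ) ≤ 1 - 1 / Real.exp 1 := by
    have h1 : (2:ℝ) ≤ Real.exp 1 := by have := Real.add_one_le_exp 1; linarith
    have h2 : 1 / Real.exp 1 ≤ 1 := by
      rw [div_le_one (Real.exp_pos 1)]; linarith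
    linarith
  obtain ⟨hμs, hσs, hνs⟩ := hSsand_max
  rw [max_mul_of_nonneg _ _ (mul_nonneg he hσ_pos.le)]
  apply max_le
  · -- chain via ν
    have hratio : 0 ≤ σ Sν / ν Sν := div_nonneg ((hμ0 Sν).trans (hμσ Sν)) hν_pos.le
    have h1 : ν Sσstar ≤ ν Sνstar := hSνstar_max _ hSσstar_card
    have h2 : σ Sσstar ≤ ν Sνstar := (hσν _).trans h1
    calc σ Sν / ν Sν * ((1 - 1 / Real.exp 1) * σ Sσstar)
        ≤ σ Sν / ν Sν * ((1 - 1 / Real.exp 1) * ν Sνstar) := by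
          apply mul_le_mul_of_nonneg_left (mul_le_mul_of_nonneg_left h2 he) hratio
      _ ≤ σ Sν / ν Sν * ν Sν := mul_le_mul_of_nonneg_left hSν_approx hratio
      _ = σ Sν := div_mul_cancel₀ _ hν_pos.ne'
      _ ≤ σ Ssand := hνs
  · -- chain via μ
    have h1 : μ Sσstar ≤ μ Sμstar := hSμstar_max _ hSσstar_card
    calc μ Sσstar / σ Sσstar * ((1 - 1 / Real.exp 1) * σ Sσstar)
        = (1 - 1 / Real.exp 1) * μ Sσstar := by
          field_simp
      _ ≤ (1 - 1 / Real.exp 1) * μ Sμstar := mul_le_mul_of_nonneg_left h1 he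
      _ ≤ μ Sμ := hSμ_approx
      _ ≤ σ Sμ := hμσ _
      _ ≤ σ Ssand := hμs
end

section
/- Let V be a finite set, let r ⊆ V × V be a binary relation (the live edges), and let P ⊆ V be a set of permitted vertices. For S ⊆ V, let Φ(S) be the least subset of V containing S and closed under the rule: if u ∈ Φ(S), (u, v) ∈ r, and v ∈ P, then v ∈ Φ(S). Then the set function S ↦ |Φ(S)| is monotone and submodular. -/
/-- Reachability from seed set `S` through live edges `r`, where every vertex
after a seed must lie in the permitted set `P`: the least set containing `S`
and closed under the rule (u reached, r u v, v ∈ P ⟹ v reached). -/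
inductive ReachPerm {V : Type*} (r : V → V → Prop) (P : Set V) (S : Set V) : V → Prop where
  | seed {v : V} : v ∈ S → ReachPerm r P S v
  | step {u v : V} : ReachPerm r P S u → r u v → v ∈ P → ReachPerm r P S v

lemma reachPerm_mono {V : Type*} (r : V → V → Prop) (P : Set V) {S T : Set V}
    (hST : S ⊆ T) {v : V} (h : ReachPerm r P S v) : ReachPerm r P T v := by
  induction h with
  | seed hv => exact ReachPerm.seed (hST hv)
  | step _ hr hP ih => exact ReachPerm.step ih hr hP

lemma reachPerm_union {V : Type*} (r : V → V → Prop) (P : Set V) (S T : Set V) :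
    {v : V | ReachPerm r P (S ∪ T) v} =
      {v : V | ReachPerm r P S v} ∪ {v : V | ReachPerm r P T v} := by
  ext v
  constructor
  · intro h
    induction h with
    | seed hv =>
      rcases hv with hv | hv
      · exact Or.inl (ReachPerm.seed hv)
      · exact Or.inr (ReachPerm.seed hv)
    | step _ hr hP ih =>
      rcases ih with h | h
      · exact Or.inl (ReachPerm.step h hr hP)
      · exact Or.inr (ReachPerm.step h hr hP)
  · rintro (h | h)
    · exact reachPerm_mono r P Set.subset_union_left h
    · exact reachPerm_mono r P Set.subset_union_right h

/-- Per-possible-world content of Theorem 5(i): the number of vertices reachable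
from `S` through permitted vertices is a monotone submodular function of `S`. -/
theorem reachPerm_ncard_monotone_submodular
    {V : Type*} [Fintype V] (r : V → V → Prop) (P : Set V) :
    (∀ S T : Set V, S ⊆ T →
        ((Set.ncard {v : V | ReachPerm r P S v} : ℝ)
          ≤ (Set.ncard {v : V | ReachPerm r P T v} : ℝ))) ∧
    (∀ (S T : Set V) (x : V), S ⊆ T → x ∉ T →
        ((Set.ncard {v : V | ReachPerm r P (insert x T) v} : ℝ)
            - (Set.ncard {v : V | ReachPerm r P T v} : ℝ)
          ≤ (Set.ncard {v : V | ReachPerm r P (insert x S) v} : ℝ)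
            - (Set.ncard {v : V | ReachPerm r P S v} : ℝ))) := by
  constructor
  · intro S T hST
    exact_mod_cast Set.ncard_le_ncard (fun v h => reachPerm_mono r P hST h) (Set.toFinite _)
  · intro S T x hST _
    set A := {v : V | ReachPerm r P {x} v} with hA
    set B := {v : V | ReachPerm r P T v} with hB
    set C := {v : V | ReachPerm r P S v} with hC
    have hCB : C ⊆ B := fun v h => reachPerm_mono r P hST h
    have hT : {v : V | ReachPerm r P (insert x T) v} = B ∪ A := by
      rw [show insert x T = {x} ∪ T from rfl, reachPerm_union]
      exact Set.union_comm _ _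
    have hS : {v : V | ReachPerm r P (insert x S) v} = C ∪ A := by
      rw [show insert x S = {x} ∪ S from rfl, reachPerm_union]
      exact Set.union_comm _ _
    rw [hT, hS]
    have e1 : (B ∪ A).ncard = B.ncard + (A \ B).ncard := by
      rw [← Set.union_diff_self, Set.ncard_union_eq Set.disjoint_sdiff_right
        (Set.toFinite _) (Set.toFinite _)]
    have e2 : (C ∪ A).ncard = C.ncard + (A \ C).ncard := by
      rw [← Set.union_diff_self, Set.ncard_union_eq Set.disjoint_sdiff_right
        (Set.toFinite _) (Set.toFinite _)]
    have hle : (A \ B).ncard ≤ (A \ C).ncard :=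
      Set.ncard_le_ncard (Set.diff_subset_diff_right hCB) (Set.toFinite _)
    rw [e1, e2]
    have hle' : ((A \ B).ncard : ℝ) ≤ ((A \ C).ncard : ℝ) := by exact_mod_cast hle
    push_cast
    linarith
end

section
/- In the possible-world Com-IC cascade, suppose q_{B|∅} = q_{B|A}. Then for all seed sets S_A, S_B ⊆ V, the B-adopted set Φ_B(S_A, S_B) is equal to the least subset of V containing S_B and closed under the rule: if u is in the set, (u, v) ∈ E, and α_B(v) ≤ q_{B|∅}, then v is in the set. In particular, Φ_B(S_A, S_B) = Φ_B(∅, S_B), i.e., the B-adopted set is independent of the A-seed set. -/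
/-- Possible-world Com-IC cascade: `ComIC E aA aB qA0 qAB qB0 qBA SA SB true v`
means node `v` adopts product A, and `... false v` means `v` adopts product B.
This inductive predicate is the least pair of subsets of `V` containing the
seed sets `SA`, `SB` and closed under the Com-IC adoption rules (the rule
"either αA v ≤ qA0, or both αA v ≤ qAB and v B-adopted" is split into the two
constructors `stepA0` and `stepAB`, and symmetrically for B). -/
inductive ComIC {V : Type*} (E : V → V → Prop) (aA aB : V → ℝ)
    (qA0 qAB qB0 qBA : ℝ) (SA SB : Set V) : Bool → V → Prop where
  | seedA {v : V} : v ∈ SA → ComIC E aA aB qA0 qAB qB0 qBA SA SB true v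
  | seedB {v : V} : v ∈ SB → ComIC E aA aB qA0 qAB qB0 qBA SA SB false v
  | stepA0 {u v : V} :
      ComIC E aA aB qA0 qAB qB0 qBA SA SB true u → E u v → aA v ≤ qA0 →
      ComIC E aA aB qA0 qAB qB0 qBA SA SB true v
  | stepAB {u v : V} :
      ComIC E aA aB qA0 qAB qB0 qBA SA SB true u → E u v → aA v ≤ qAB →
      ComIC E aA aB qA0 qAB qB0 qBA SA SB false v →
      ComIC E aA aB qA0 qAB qB0 qBA SA SB true v
  | stepB0 {u v : V} :
      ComIC E aA aB qA0 qAB qB0 qBA SA SB false u → E u v → aB v ≤ qB0 →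
      ComIC E aA aB qA0 qAB qB0 qBA SA SB false v
  | stepBA {u v : V} :
      ComIC E aA aB qA0 qAB qB0 qBA SA SB false u → E u v → aB v ≤ qBA →
      ComIC E aA aB qA0 qAB qB0 qBA SA SB true v →
      ComIC E aA aB qA0 qAB qB0 qBA SA SB false v

/-- The set of A-adopted nodes of the possible-world Com-IC cascade. -/
def PhiA {V : Type*} (E : V → V → Prop) (aA aB : V → ℝ)
    (qA0 qAB qB0 qBA : ℝ) (SA SB : Set V) : Set V :=
  {v : V | ComIC E aA aB qA0 qAB qB0 qBA SA SB true v}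

/-- The set of B-adopted nodes of the possible-world Com-IC cascade. -/
def PhiB {V : Type*} (E : V → V → Prop) (aA aB : V → ℝ)
    (qA0 qAB qB0 qBA : ℝ) (SA SB : Set V) : Set V :=
  {v : V | ComIC E aA aB qA0 qAB qB0 qBA SA SB false v}

/-- The least subset of `V` containing `SB` and closed under the rule:
if `u` is in the set, `(u,v)` is a live edge, and `αB v ≤ qB0`, then `v` is in
the set. -/
inductive BClosure {V : Type*} (E : V → V → Prop) (aB : V → ℝ) (qB0 : ℝ)
    (SB : Set V) : V → Prop where
  | seed {v : V} : v ∈ SB → BClosure E aB qB0 SB v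
  | step {u v : V} : BClosure E aB qB0 SB u → E u v → aB v ≤ qB0 →
      BClosure E aB qB0 SB v

/-- Possible-world form of Lemma 3: if `qB0 = qBA` then the B-adopted set is
the plain B-closure of the B-seed set, and in particular is independent of the
A-seed set. -/
theorem phiB_indifferent_of_qB0_eq_qBA
    {V : Type*} [Fintype V] (E : V → V → Prop) (aA aB : V → ℝ)
    (qA0 qAB qB0 qBA : ℝ)
    (haA : ∀ v : V, 0 ≤ aA v ∧ aA v ≤ 1)
    (haB : ∀ v : V, 0 ≤ aB v ∧ aB v ≤ 1)
    (hqA0 : 0 ≤ qA0) (hqA : qA0 ≤ qAB) (hqAB : qAB ≤ 1)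
    (hqB0 : 0 ≤ qB0) (hqB : qB0 ≤ qBA) (hqBA : qBA ≤ 1)
    (heq : qB0 = qBA) :
    ∀ SA SB : Set V,
      PhiB E aA aB qA0 qAB qB0 qBA SA SB = {v : V | BClosure E aB qB0 SB v} ∧
      PhiB E aA aB qA0 qAB qB0 qBA SA SB = PhiB E aA aB qA0 qAB qB0 qBA ∅ SB := by
  have key : ∀ SA SB : Set V,
      PhiB E aA aB qA0 qAB qB0 qBA SA SB = {v : V | BClosure E aB qB0 SB v} := by
    intro SA SB
    ext v
    constructor
    · intro hv
      have : ∀ (b : Bool) (w : V), ComIC E aA aB qA0 qAB qB0 qBA SA SB b w →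
          b = false → BClosure E aB qB0 SB w := by
        intro b w h
        induction h with
        | seedA h => intro hb; simp at hb
        | seedB h => intro _; exact BClosure.seed h
        | stepA0 h he hq ih => intro hb; simp at hb
        | stepAB h he hq h2 ih ih2 => intro hb; simp at hb
        | stepB0 h he hq ih =>
            intro _; exact BClosure.step (ih rfl) he hq
        | stepBA h he hq h2 ih ih2 =>
            intro _; exact BClosure.step (ih rfl) he (heq ▸ hq)
      exact this false v hv rfl
    · intro hv
      induction hv with
      | seed h => exact ComIC.seedB h
      | step h he hq ih => exact ComIC.stepB0 ih he hq
  intro SA SB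
  exact ⟨key SA SB, (key SA SB).trans (key ∅ SB).symm⟩
end

section
/- In the possible-world Com-IC cascade under one-way complementarity (q_{A|∅} ≤ q_{A|B} and q_{B|∅} = q_{B|A}), for any fixed B-seed set S_B ⊆ V, the set function S_A ↦ |Φ_A(S_A, S_B)| on subsets of V is monotone and submodular. -/
lemma ComIC.mono' {V : Type*} {E : V → V → Prop} {aA aB : V → ℝ}
    {qA0 qAB qB0 qBA : ℝ} {SA SA' SB : Set V} (h : SA ⊆ SA') {b : Bool} {v : V}
    (hc : ComIC E aA aB qA0 qAB qB0 qBA SA SB b v) :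
    ComIC E aA aB qA0 qAB qB0 qBA SA' SB b v := by
  induction hc with
  | seedA h' => exact .seedA (h h')
  | seedB h' => exact .seedB h'
  | stepA0 hu he ha ih => exact .stepA0 ih he ha
  | stepAB hu he ha hb ih ihb => exact .stepAB ih he ha ihb
  | stepB0 hu he ha ih => exact .stepB0 ih he ha
  | stepBA hu he ha hb ih iha => exact .stepBA ih he ha iha

/-- When `qB0 = qBA`, the B-process is independent of the A-seed set. -/
lemma ComIC.bfixed {V : Type*} {E : V → V → Prop} {aA aB : V → ℝ}
    {qA0 qAB qB0 qBA : ℝ} (hone : qB0 = qBA) {SA SB : Set V} (SA' : Set V)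
    {b : Bool} {v : V}
    (hc : ComIC E aA aB qA0 qAB qB0 qBA SA SB b v) (hb : b = false) :
    ComIC E aA aB qA0 qAB qB0 qBA SA' SB false v := by
  induction hc with
  | seedA h' => simp at hb
  | seedB h' => exact .seedB h'
  | stepA0 _ _ _ _ => simp at hb
  | stepAB _ _ _ _ _ _ => simp at hb
  | stepB0 hu he ha ih => exact .stepB0 (ih rfl) he ha
  | stepBA hu he ha hb' ih iha =>
      exact .stepB0 (ih rfl) he (by rw [hone]; exact ha)

lemma ComIC.union_split {V : Type*} {E : V → V → Prop} {aA aB : V → ℝ}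
    {qA0 qAB qB0 qBA : ℝ} (hone : qB0 = qBA) {S T SB : Set V}
    {b : Bool} {v : V}
    (hc : ComIC E aA aB qA0 qAB qB0 qBA (S ∪ T) SB b v) (hb : b = true) :
    ComIC E aA aB qA0 qAB qB0 qBA S SB true v ∨
    ComIC E aA aB qA0 qAB qB0 qBA T SB true v := by
  induction hc with
  | seedA h' =>
      rcases h' with h | h
      · exact Or.inl (.seedA h)
      · exact Or.inr (.seedA h)
  | seedB h' => simp at hb
  | stepA0 hu he ha ih =>
      rcases ih rfl with h | h
      · exact Or.inl (.stepA0 h he ha)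
      · exact Or.inr (.stepA0 h he ha)
  | stepAB hu he ha hBv ih _ =>
      rcases ih rfl with h | h
      · exact Or.inl (.stepAB h he ha (hBv.bfixed hone _ rfl))
      · exact Or.inr (.stepAB h he ha (hBv.bfixed hone _ rfl))
  | stepB0 _ _ _ _ => simp at hb
  | stepBA _ _ _ _ _ _ => simp at hb

lemma PhiA_union {V : Type*} {E : V → V → Prop} {aA aB : V → ℝ}
    {qA0 qAB qB0 qBA : ℝ} (hone : qB0 = qBA) (S T SB : Set V) :
    PhiA E aA aB qA0 qAB qB0 qBA (S ∪ T) SB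
      = PhiA E aA aB qA0 qAB qB0 qBA S SB ∪ PhiA E aA aB qA0 qAB qB0 qBA T SB := by
  ext v
  constructor
  · intro h
    exact ComIC.union_split hone h rfl
  · rintro (h | h)
    · exact h.mono' Set.subset_union_left
    · exact h.mono' Set.subset_union_right

lemma PhiA_mono {V : Type*} {E : V → V → Prop} {aA aB : V → ℝ}
    {qA0 qAB qB0 qBA : ℝ} {S T SB : Set V} (h : S ⊆ T) :
    PhiA E aA aB qA0 qAB qB0 qBA S SB ⊆ PhiA E aA aB qA0 qAB qB0 qBA T SB :=
  fun _ hv => hv.mono' h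

/-- Theorem 5(i) per possible world: under one-way complementarity
(`qA0 ≤ qAB` and `qB0 = qBA`), for any fixed B-seed set, the function
`S_A ↦ |Φ_A(S_A, S_B)|` is monotone and submodular. -/
theorem phiA_ncard_monotone_submodular_in_SA
    {V : Type*} [Fintype V] (E : V → V → Prop) (aA aB : V → ℝ)
    (qA0 qAB qB0 qBA : ℝ)
    (haA : ∀ v : V, 0 ≤ aA v ∧ aA v ≤ 1)
    (haB : ∀ v : V, 0 ≤ aB v ∧ aB v ≤ 1)
    (hqA0 : 0 ≤ qA0) (hqA : qA0 ≤ qAB) (hqAB : qAB ≤ 1)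
    (hqB0 : 0 ≤ qB0) (hqB : qB0 ≤ qBA) (hqBA : qBA ≤ 1)
    (hone : qB0 = qBA)
    (SB : Set V) :
    (∀ S T : Set V, S ⊆ T →
        ((PhiA E aA aB qA0 qAB qB0 qBA S SB).ncard : ℝ)
          ≤ ((PhiA E aA aB qA0 qAB qB0 qBA T SB).ncard : ℝ)) ∧
    (∀ (S T : Set V) (x : V), S ⊆ T → x ∉ T →
        ((PhiA E aA aB qA0 qAB qB0 qBA (insert x T) SB).ncard : ℝ)
            - ((PhiA E aA aB qA0 qAB qB0 qBA T SB).ncard : ℝ)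
          ≤ ((PhiA E aA aB qA0 qAB qB0 qBA (insert x S) SB).ncard : ℝ)
            - ((PhiA E aA aB qA0 qAB qB0 qBA S SB).ncard : ℝ)) := by
  constructor
  · intro S T hST
    exact_mod_cast Nat.cast_le.mpr
      (Set.ncard_le_ncard (PhiA_mono hST) (Set.toFinite _))
  · intro S T x hST hxT
    set A := PhiA E aA aB qA0 qAB qB0 qBA {x} SB with hA
    have key : ∀ U : Set V,
        ((PhiA E aA aB qA0 qAB qB0 qBA (insert x U) SB).ncard : ℝ)
          = ((PhiA E aA aB qA0 qAB qB0 qBA U SB).ncard : ℝ)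
            + ((A \ PhiA E aA aB qA0 qAB qB0 qBA U SB).ncard : ℝ) := by
      intro U
      have h1 : insert x U = {x} ∪ U := by simp
      rw [h1, PhiA_union hone]
      set P := PhiA E aA aB qA0 qAB qB0 qBA U SB
      have h2 : A ∪ P = P ∪ (A \ P) := by
        rw [Set.union_diff_self]; exact Set.union_comm _ _
      rw [h2, Set.ncard_union_eq Set.disjoint_sdiff_right
        (Set.toFinite _) (Set.toFinite _)]
      push_cast
      ring
    rw [key S, key T]
    have hsub : PhiA E aA aB qA0 qAB qB0 qBA S SB
        ⊆ PhiA E aA aB qA0 qAB qB0 qBA T SB := PhiA_mono hST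
    have : (A \ PhiA E aA aB qA0 qAB qB0 qBA T SB).ncard
        ≤ (A \ PhiA E aA aB qA0 qAB qB0 qBA S SB).ncard :=
      Set.ncard_le_ncard (Set.diff_subset_diff_right hsub) (Set.toFinite _)
    have := Nat.cast_le (α := ℝ).mpr this
    linarith
end

section
/- In the possible-world Com-IC cascade under mutual complementarity with q_{B|A} = 1, let S_A, S_B ⊆ V be seed sets, and let w_0, w_1, …, w_m be a path of live edges (i.e., (w_{i−1}, w_i) ∈ E for 1 ≤ i ≤ m) with w_0 ∈ S_A, such that for every i with 1 ≤ i ≤ m: α_A(w_i) ≤ q_{A|B}, and moreover if α_A(w_i) > q_{A|∅} then α_B(w_i) ≤ q_{B|∅}. Suppose that for some index j with 1 ≤ j ≤ m, w_j ∈ Φ_B(S_A, S_B), and that every w_i with 1 ≤ i < j satisfies α_A(w_i) ≤ q_{A|∅}. Then for every i with j ≤ i ≤ m, w_i ∈ Φ_A(S_A, S_B) and w_i ∈ Φ_B(S_A, S_B). -/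
/-- Claim 1 (clm:bjoina) in the proof of Theorem 6: on a live-edge A-path whose
nodes satisfy the stated threshold conditions, once some node `w_j` adopts B
and all earlier nodes are A-ready, every later node on the path adopts both A
and B (under mutual complementarity with `qBA = 1`). -/
theorem comIC_path_adopts_both_after_B
    {V : Type*} [Fintype V] (E : V → V → Prop) (aA aB : V → ℝ)
    (qA0 qAB qB0 qBA : ℝ)
    (haA : ∀ v : V, 0 ≤ aA v ∧ aA v ≤ 1)
    (haB : ∀ v : V, 0 ≤ aB v ∧ aB v ≤ 1)
    (hqA0 : 0 ≤ qA0) (hqA : qA0 ≤ qAB) (hqAB : qAB ≤ 1)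
    (hqB0 : 0 ≤ qB0) (hqB : qB0 ≤ qBA) (hqBA : qBA = 1)
    (SA SB : Set V) (m : ℕ) (w : ℕ → V)
    (hw0 : w 0 ∈ SA)
    (hedge : ∀ i : ℕ, 1 ≤ i → i ≤ m → E (w (i - 1)) (w i))
    (hthresh : ∀ i : ℕ, 1 ≤ i → i ≤ m →
        aA (w i) ≤ qAB ∧ (qA0 < aA (w i) → aB (w i) ≤ qB0))
    (j : ℕ) (hj1 : 1 ≤ j) (hjm : j ≤ m)
    (hwjB : w j ∈ PhiB E aA aB qA0 qAB qB0 qBA SA SB)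
    (hready : ∀ i : ℕ, 1 ≤ i → i < j → aA (w i) ≤ qA0) :
    ∀ i : ℕ, j ≤ i → i ≤ m →
      w i ∈ PhiA E aA aB qA0 qAB qB0 qBA SA SB ∧
      w i ∈ PhiB E aA aB qA0 qAB qB0 qBA SA SB := by
  -- every node strictly before j adopts A
  have hpre : ∀ i : ℕ, i < j → w i ∈ PhiA E aA aB qA0 qAB qB0 qBA SA SB := by
    intro i
    induction i with
    | zero => intro _; exact ComIC.seedA hw0
    | succ k ih =>
      intro hk
      have hkj : k < j := Nat.lt_of_succ_lt hk
      have h1 : 1 ≤ k + 1 := Nat.succ_le_succ (Nat.zero_le k)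
      have hm : k + 1 ≤ m := le_trans (Nat.le_of_lt hk) hjm
      have he := hedge (k+1) h1 hm
      simp only [Nat.add_sub_cancel] at he
      exact ComIC.stepA0 (ih hkj) he (hready (k+1) h1 hk)
  intro i hji
  induction i, hji using Nat.le_induction with
  | base =>
    intro _
    have hA : w j ∈ PhiA E aA aB qA0 qAB qB0 qBA SA SB := by
      have he := hedge j hj1 hjm
      have hprev : w (j-1) ∈ PhiA E aA aB qA0 qAB qB0 qBA SA SB :=
        hpre (j-1) (Nat.sub_lt (Nat.lt_of_lt_of_le Nat.zero_lt_one hj1) Nat.one_pos)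
      exact ComIC.stepAB hprev he (hthresh j hj1 hjm).1 hwjB
    exact ⟨hA, hwjB⟩
  | succ k hjk ih =>
    intro hkm
    have hkm' : k ≤ m := Nat.le_of_succ_le hkm
    obtain ⟨hkA, hkB⟩ := ih hkm'
    have h1 : 1 ≤ k + 1 := Nat.succ_le_succ (Nat.zero_le k)
    have he := hedge (k+1) h1 hkm
    simp only [Nat.add_sub_cancel] at he
    obtain ⟨ht1, ht2⟩ := hthresh (k+1) h1 hkm
    by_cases hc : aA (w (k+1)) ≤ qA0
    · have hA : w (k+1) ∈ PhiA E aA aB qA0 qAB qB0 qBA SA SB :=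
        ComIC.stepA0 hkA he hc
      have hB : w (k+1) ∈ PhiB E aA aB qA0 qAB qB0 qBA SA SB :=
        ComIC.stepBA hkB he (by rw [hqBA]; exact (haB (w (k+1))).2) hA
      exact ⟨hA, hB⟩
    · have hB : w (k+1) ∈ PhiB E aA aB qA0 qAB qB0 qBA SA SB :=
        ComIC.stepB0 hkB he (ht2 (lt_of_not_ge hc))
      have hA : w (k+1) ∈ PhiA E aA aB qA0 qAB qB0 qBA SA SB :=
        ComIC.stepAB hkA he ht1 hB
      exact ⟨hA, hB⟩
end

section
/- In the possible-world Com-IC cascade under mutual complementarity with q_{B|∅} = 1, for any A-seed set S_A ⊆ V and any B-seed set T ⊆ V, Φ_A(S_A, T) ⊆ Φ_A(S_A, S_A); consequently, for any X ⊆ V, Φ_A(S_A, T) ⊆ Φ_A(S_A, S_A ∪ X), so taking the B-seed set to be S_A together with arbitrary additional nodes maximizes the number of A-adopted nodes over all choices of B-seed set. -/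
/-- Seed monotonicity in the B-seed set. -/
lemma ComIC.mono_SB {V : Type*} {E : V → V → Prop} {aA aB : V → ℝ}
    {qA0 qAB qB0 qBA : ℝ} {SA SB SB' : Set V} (hS : SB ⊆ SB') {b : Bool} {v : V}
    (h : ComIC E aA aB qA0 qAB qB0 qBA SA SB b v) :
    ComIC E aA aB qA0 qAB qB0 qBA SA SB' b v := by
  induction h with
  | seedA h => exact .seedA h
  | seedB h => exact .seedB (hS h)
  | stepA0 _ he ha ih => exact .stepA0 ih he ha
  | stepAB _ he ha _ ih ihB => exact .stepAB ih he ha ihB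
  | stepB0 _ he ha ih => exact .stepB0 ih he ha
  | stepBA _ he ha _ ih ihA => exact .stepBA ih he ha ihA

/-- With `qB0 = 1` and B-seeds equal to A-seeds, every A-adopted node is B-adopted. -/
lemma ComIC.AtoB {V : Type*} {E : V → V → Prop} {aA aB : V → ℝ}
    {qA0 qAB qB0 qBA : ℝ} {SA : Set V}
    (haB : ∀ v : V, aB v ≤ qB0) {b : Bool} {v : V}
    (h : ComIC E aA aB qA0 qAB qB0 qBA SA SA b v) :
    b = true → ComIC E aA aB qA0 qAB qB0 qBA SA SA false v := by
  induction h with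
  | seedA h => exact fun _ => .seedB h
  | seedB h => exact fun h' => nomatch h'
  | stepA0 _ he _ ih => exact fun _ => .stepB0 (ih rfl) he (haB _)
  | stepAB _ he _ _ ih _ => exact fun _ => .stepB0 (ih rfl) he (haB _)
  | stepB0 _ _ _ _ => exact fun h' => nomatch h'
  | stepBA _ _ _ _ _ _ => exact fun h' => nomatch h'

/-- Key lemma: A-adoption with any B-seed set `T` implies A-adoption with B-seeds `SA`. -/
lemma ComIC.key {V : Type*} {E : V → V → Prop} {aA aB : V → ℝ}
    {qA0 qAB qB0 qBA : ℝ} {SA T : Set V}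
    (haB : ∀ v : V, aB v ≤ qB0) {b : Bool} {v : V}
    (h : ComIC E aA aB qA0 qAB qB0 qBA SA T b v) :
    b = true → ComIC E aA aB qA0 qAB qB0 qBA SA SA true v := by
  induction h with
  | seedA h => exact fun _ => .seedA h
  | seedB h => exact fun h' => nomatch h'
  | stepA0 _ he ha ih => exact fun _ => .stepA0 (ih rfl) he ha
  | stepAB _ he ha _ ih _ =>
      exact fun _ => .stepAB (ih rfl) he ha
        (.stepB0 ((ih rfl).AtoB haB rfl) he (haB _))
  | stepB0 _ _ _ _ => exact fun h' => nomatch h'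
  | stepBA _ _ _ _ _ _ => exact fun h' => nomatch h'

/-- Theorem 2 per possible world: under mutual complementarity with `qB0 = 1`,
copying the A-seed set as the B-seed set (possibly with arbitrary extra nodes)
maximizes the set of A-adopted nodes over all choices of B-seed set. -/
theorem copying_optimal_of_qB0_eq_one
    {V : Type*} [Fintype V] (E : V → V → Prop) (aA aB : V → ℝ)
    (qA0 qAB qB0 qBA : ℝ)
    (haA : ∀ v : V, 0 ≤ aA v ∧ aA v ≤ 1)
    (haB : ∀ v : V, 0 ≤ aB v ∧ aB v ≤ 1)
    (hqA0 : 0 ≤ qA0) (hqA : qA0 ≤ qAB) (hqAB : qAB ≤ 1)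
    (hqB0 : qB0 = 1) (hqB : qB0 ≤ qBA) (hqBA : qBA ≤ 1)
    (SA : Set V) :
    (∀ T : Set V,
        PhiA E aA aB qA0 qAB qB0 qBA SA T ⊆ PhiA E aA aB qA0 qAB qB0 qBA SA SA) ∧
    (∀ T X : Set V,
        PhiA E aA aB qA0 qAB qB0 qBA SA T
          ⊆ PhiA E aA aB qA0 qAB qB0 qBA SA (SA ∪ X)) ∧
    (∀ T X : Set V,
        (PhiA E aA aB qA0 qAB qB0 qBA SA T).ncard
          ≤ (PhiA E aA aB qA0 qAB qB0 qBA SA (SA ∪ X)).ncard) := by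
  have haB' : ∀ v : V, aB v ≤ qB0 := fun v => hqB0 ▸ (haB v).2
  have h1 : ∀ T : Set V,
      PhiA E aA aB qA0 qAB qB0 qBA SA T ⊆ PhiA E aA aB qA0 qAB qB0 qBA SA SA :=
    fun T v hv => (ComIC.key haB' hv) rfl
  have h2 : ∀ T X : Set V,
      PhiA E aA aB qA0 qAB qB0 qBA SA T
        ⊆ PhiA E aA aB qA0 qAB qB0 qBA SA (SA ∪ X) :=
    fun T X v hv => ComIC.mono_SB Set.subset_union_left (h1 T hv)
  exact ⟨h1, h2, fun T X =>
    Set.ncard_le_ncard (h2 T X) (Set.toFinite _)⟩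
end

section
/- Fix a finite set V of nodes, a set E ⊆ V × V of live edges, and threshold functions α_A, α_B : V → [0,1]. Let (q_{A|∅}, q_{A|B}, q_{B|∅}, q_{B|A}) and (q'_{A|∅}, q'_{A|B}, q'_{B|∅}, q'_{B|A}) be two parameter vectors in [0,1]^4, each satisfying mutual complementarity (q_{A|∅} ≤ q_{A|B} and q_{B|∅} ≤ q_{B|A}, and likewise for the primed parameters), with q_{A|∅} ≤ q'_{A|∅}, q_{A|B} ≤ q'_{A|B}, q_{B|∅} ≤ q'_{B|∅}, and q_{B|A} ≤ q'_{B|A}. Then for all seed sets S_A, S_B ⊆ V, the adopted sets of the possible-world Com-IC cascade with parameters (q) are contained in those with parameters (q'): Φ_A^{q}(S_A, S_B) ⊆ Φ_A^{q'}(S_A, S_B) and Φ_B^{q}(S_A, S_B) ⊆ Φ_B^{q'}(S_A, S_B). -/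
/-- Theorem 9 per possible world: within the mutual-complementarity region of
parameters, increasing the Global Adoption Probabilities pointwise enlarges the
adopted sets of the possible-world Com-IC cascade. -/
theorem comIC_monotone_in_GAPs
    {V : Type*} [Fintype V] (E : V → V → Prop) (aA aB : V → ℝ)
    (qA0 qAB qB0 qBA qA0' qAB' qB0' qBA' : ℝ)
    (haA : ∀ v : V, 0 ≤ aA v ∧ aA v ≤ 1)
    (haB : ∀ v : V, 0 ≤ aB v ∧ aB v ≤ 1)
    (hqA0 : 0 ≤ qA0) (hqA : qA0 ≤ qAB) (hqAB : qAB ≤ 1)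
    (hqB0 : 0 ≤ qB0) (hqB : qB0 ≤ qBA) (hqBA : qBA ≤ 1)
    (hqA0' : 0 ≤ qA0') (hqA' : qA0' ≤ qAB') (hqAB' : qAB' ≤ 1)
    (hqB0' : 0 ≤ qB0') (hqB' : qB0' ≤ qBA') (hqBA' : qBA' ≤ 1)
    (hA0 : qA0 ≤ qA0') (hAB : qAB ≤ qAB') (hB0 : qB0 ≤ qB0') (hBA : qBA ≤ qBA') :
    ∀ SA SB : Set V,
      PhiA E aA aB qA0 qAB qB0 qBA SA SB
          ⊆ PhiA E aA aB qA0' qAB' qB0' qBA' SA SB ∧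
      PhiB E aA aB qA0 qAB qB0 qBA SA SB
          ⊆ PhiB E aA aB qA0' qAB' qB0' qBA' SA SB := by
  intro SA SB
  have key : ∀ b v, ComIC E aA aB qA0 qAB qB0 qBA SA SB b v →
      ComIC E aA aB qA0' qAB' qB0' qBA' SA SB b v := by
    intro b v h
    induction h with
    | seedA h => exact ComIC.seedA h
    | seedB h => exact ComIC.seedB h
    | stepA0 _ he ha ih => exact ComIC.stepA0 ih he (ha.trans hA0)
    | stepAB _ he ha _ ih ihB => exact ComIC.stepAB ih he (ha.trans hAB) ihB
    | stepB0 _ he ha ih => exact ComIC.stepB0 ih he (ha.trans hB0)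
    | stepBA _ he ha _ ih ihA => exact ComIC.stepBA ih he (ha.trans hBA) ihA
  exact ⟨fun v h => key true v h, fun v h => key false v h⟩
end

section
/- In the possible-world Com-IC cascade under one-way complementarity (q_{A|∅} ≤ q_{A|B} and q_{B|∅} = q_{B|A}), fix a B-seed set S_B ⊆ V and let B* = Φ_B(∅, S_B). Then for all nodes u, v ∈ V, v ∈ Φ_A({u}, S_B) if and only if v = u or there exist m ≥ 1 and nodes u = w_0, w_1, …, w_m = v with (w_{i−1}, w_i) ∈ E for all 1 ≤ i ≤ m, such that every w_i with 1 ≤ i ≤ m satisfies: α_A(w_i) ≤ q_{A|∅}, or both α_A(w_i) ≤ q_{A|B} and w_i ∈ B*. -/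
/-- Monotonicity in the A-seed set. -/
lemma ComIC.mono_SA {V : Type*} {E : V → V → Prop} {aA aB : V → ℝ}
    {qA0 qAB qB0 qBA : ℝ} {SA SA' SB : Set V} (hSA : SA ⊆ SA')
    {b : Bool} {v : V} (h : ComIC E aA aB qA0 qAB qB0 qBA SA SB b v) :
    ComIC E aA aB qA0 qAB qB0 qBA SA' SB b v := by
  induction h with
  | seedA h => exact ComIC.seedA (hSA h)
  | seedB h => exact ComIC.seedB h
  | stepA0 _ he hq ih => exact ComIC.stepA0 ih he hq
  | stepAB _ he hq _ ih ihB => exact ComIC.stepAB ih he hq ihB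
  | stepB0 _ he hq ih => exact ComIC.stepB0 ih he hq
  | stepBA _ he hq _ ih ihA => exact ComIC.stepBA ih he hq ihA

/-- Under `qB0 = qBA`, the B-cascade does not depend on the A-seed set. -/
lemma ComIC.B_indep {V : Type*} {E : V → V → Prop} {aA aB : V → ℝ}
    {qA0 qAB qB0 qBA : ℝ} {SA SB : Set V} (hone : qB0 = qBA)
    {v : V} (h : ComIC E aA aB qA0 qAB qB0 qBA SA SB false v) :
    ComIC E aA aB qA0 qAB qB0 qBA ∅ SB false v := by
  have key : ∀ (b : Bool) (v : V), ComIC E aA aB qA0 qAB qB0 qBA SA SB b v →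
      b = false → ComIC E aA aB qA0 qAB qB0 qBA ∅ SB false v := by
    intro b v h
    induction h with
    | seedA h => intro hb; exact absurd hb (by simp)
    | seedB h => intro _; exact ComIC.seedB h
    | stepA0 _ he hq ih => intro hb; exact absurd hb (by simp)
    | stepAB _ he hq _ ih ihB => intro hb; exact absurd hb (by simp)
    | stepB0 _ he hq ih => intro _; exact ComIC.stepB0 (ih rfl) he hq
    | stepBA _ he hq _ ih ihA =>
        intro _; exact ComIC.stepB0 (ih rfl) he (hone ▸ hq)
  exact key false v h rfl

/-- Extend a condition-respecting path by one edge. -/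
lemma path_extend {V : Type*} (E : V → V → Prop) (C : V → Prop) (u u' v : V)
    (h : u' = u ∨ ∃ (m : ℕ) (w : ℕ → V), 1 ≤ m ∧ w 0 = u ∧ w m = u' ∧
      (∀ i : ℕ, 1 ≤ i → i ≤ m → E (w (i - 1)) (w i)) ∧
      (∀ i : ℕ, 1 ≤ i → i ≤ m → C (w i)))
    (he : E u' v) (hc : C v) :
    ∃ (m : ℕ) (w : ℕ → V), 1 ≤ m ∧ w 0 = u ∧ w m = v ∧
      (∀ i : ℕ, 1 ≤ i → i ≤ m → E (w (i - 1)) (w i)) ∧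
      (∀ i : ℕ, 1 ≤ i → i ≤ m → C (w i)) := by
  rcases h with rfl | ⟨m, w, hm, h0, hmv, hE, hC⟩
  · refine ⟨1, fun i => if i = 0 then u' else v, le_refl 1, by simp, by simp, ?_, ?_⟩
    · intro i h1 h2
      have : i = 1 := by omega
      subst this; simpa using he
    · intro i h1 h2
      have : i = 1 := by omega
      subst this; simpa using hc
  · refine ⟨m + 1, fun i => if i ≤ m then w i else v, by omega,
      by simp [hm, h0], by simp, ?_, ?_⟩
    · intro i h1 h2
      rcases Nat.lt_or_ge i (m + 1) with hi | hi
      · have hi' : i ≤ m := by omega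
        have hi'' : i - 1 ≤ m := by omega
        simpa [hi', hi''] using hE i h1 hi'
      · have : i = m + 1 := by omega
        subst this
        have h1' : m + 1 - 1 = m := by omega
        simp only [h1', if_pos (le_refl m), if_neg (by omega : ¬ m + 1 ≤ m)]
        rw [hmv]; exact he
    · intro i h1 h2
      rcases Nat.lt_or_ge i (m + 1) with hi | hi
      · have hi' : i ≤ m := by omega
        simpa [hi'] using hC i h1 hi'
      · have : i = m + 1 := by omega
        subst this
        simpa [(by omega : ¬ m + 1 ≤ m)] using hc

/-- Correctness content of Theorem 7 (RR-SIM): under one-way complementarity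
(`qA0 ≤ qAB` and `qB0 = qBA`), with `B* = Φ_B(∅, S_B)`, a node `v` is A-adopted
when `u` is the sole A-seed iff `v = u` or there is a live-edge path from `u`
to `v` all of whose nodes after `u` are permitted given `B*`. -/
theorem rrSIM_path_characterization
    {V : Type*} [Fintype V] (E : V → V → Prop) (aA aB : V → ℝ)
    (qA0 qAB qB0 qBA : ℝ)
    (haA : ∀ v : V, 0 ≤ aA v ∧ aA v ≤ 1)
    (haB : ∀ v : V, 0 ≤ aB v ∧ aB v ≤ 1)
    (hqA0 : 0 ≤ qA0) (hqA : qA0 ≤ qAB) (hqAB : qAB ≤ 1)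
    (hqB0 : 0 ≤ qB0) (hqB : qB0 ≤ qBA) (hqBA : qBA ≤ 1)
    (hone : qB0 = qBA)
    (SB : Set V) :
    ∀ u v : V,
      v ∈ PhiA E aA aB qA0 qAB qB0 qBA {u} SB ↔
        (v = u ∨
          ∃ (m : ℕ) (w : ℕ → V), 1 ≤ m ∧ w 0 = u ∧ w m = v ∧
            (∀ i : ℕ, 1 ≤ i → i ≤ m → E (w (i - 1)) (w i)) ∧
            (∀ i : ℕ, 1 ≤ i → i ≤ m →
              (aA (w i) ≤ qA0 ∨
                (aA (w i) ≤ qAB ∧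
                  w i ∈ PhiB E aA aB qA0 qAB qB0 qBA ∅ SB)))) := by
  intro u v
  set C : V → Prop := fun x => aA x ≤ qA0 ∨
      (aA x ≤ qAB ∧ x ∈ PhiB E aA aB qA0 qAB qB0 qBA ∅ SB) with hCdef
  constructor
  · intro hv
    have key : ∀ (b : Bool) (x : V),
        ComIC E aA aB qA0 qAB qB0 qBA {u} SB b x → b = true →
        (x = u ∨ ∃ (m : ℕ) (w : ℕ → V), 1 ≤ m ∧ w 0 = u ∧ w m = x ∧
          (∀ i : ℕ, 1 ≤ i → i ≤ m → E (w (i - 1)) (w i)) ∧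
          (∀ i : ℕ, 1 ≤ i → i ≤ m → C (w i))) := by
      intro b x h
      induction h with
      | seedA h => intro _; exact Or.inl h
      | seedB h => intro hb; exact absurd hb (by simp)
      | stepA0 _ he hq ih =>
          intro _
          exact Or.inr (path_extend E C u _ _ (ih rfl) he (Or.inl hq))
      | stepAB hB he hq hBv ih ihB =>
          intro _
          refine Or.inr (path_extend E C u _ _ (ih rfl) he
            (Or.inr ⟨hq, ?_⟩))
          exact ComIC.B_indep hone hBv
      | stepB0 _ he hq ih => intro hb; exact absurd hb (by simp)
      | stepBA _ he hq _ ih ihA => intro hb; exact absurd hb (by simp)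
    exact key true v hv rfl
  · rintro (rfl | ⟨m, w, hm, h0, hmv, hE, hC⟩)
    · exact ComIC.seedA rfl
    · have key : ∀ i : ℕ, i ≤ m →
          ComIC E aA aB qA0 qAB qB0 qBA {u} SB true (w i) := by
        intro i
        induction i with
        | zero => intro _; rw [h0]; exact ComIC.seedA rfl
        | succ n ih =>
            intro hn
            have hn' : n ≤ m := by omega
            have he := hE (n + 1) (by omega) hn
            have hc := hC (n + 1) (by omega) hn
            have hn1 : n + 1 - 1 = n := by omega
            rw [hn1] at he
            rcases hc with hc | ⟨hc1, hc2⟩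
            · exact ComIC.stepA0 (ih hn') he hc
            · exact ComIC.stepAB (ih hn') he hc1
                (ComIC.mono_SA (Set.empty_subset _) hc2)
      rw [← hmv]; exact key m le_rfl
end

section
/- In the possible-world Com-IC cascade under one-way complementarity (q_{A|∅} ≤ q_{A|B} and q_{B|∅} = q_{B|A}), fix a B-seed set S_B ⊆ V. For every A-seed set S_A ⊆ V and every node v ∈ Φ_A(S_A, S_B), there exists a single node s ∈ S_A such that v ∈ Φ_A({s}, S_B). -/
/-- Under `qB0 = qBA`, B-adoption does not depend on the A-seed set. -/
theorem comIC_B_indep {V : Type*} (E : V → V → Prop) (aA aB : V → ℝ)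
    (qA0 qAB qB0 qBA : ℝ) (hone : qB0 = qBA) (SA SA' SB : Set V) :
    ∀ (b : Bool) (v : V), ComIC E aA aB qA0 qAB qB0 qBA SA SB b v →
      b = false → ComIC E aA aB qA0 qAB qB0 qBA SA' SB false v := by
  intro b v h
  induction h with
  | seedA hv => intro h; exact absurd h (by simp)
  | seedB hv => intro _; exact ComIC.seedB hv
  | stepA0 _ _ _ _ => intro h; exact absurd h (by simp)
  | stepAB _ _ _ _ _ _ => intro h; exact absurd h (by simp)
  | stepB0 _ he hle ih => exact fun _ => ComIC.stepB0 (ih rfl) he hle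
  | stepBA _ he hle _ ih _ =>
      exact fun _ => ComIC.stepB0 (ih rfl) he (hone ▸ hle)

/-- Key claim in the proof of Theorem 5: under one-way complementarity
(`qA0 ≤ qAB` and `qB0 = qBA`), any node A-adopted under A-seed set `S_A` is
already A-adopted under some singleton A-seed drawn from `S_A` (property (P2)
of the indicator of A-adoption as a function of the A-seed set). -/
theorem phiA_single_A_seed_suffices
    {V : Type*} [Fintype V] (E : V → V → Prop) (aA aB : V → ℝ)
    (qA0 qAB qB0 qBA : ℝ)
    (haA : ∀ v : V, 0 ≤ aA v ∧ aA v ≤ 1)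
    (haB : ∀ v : V, 0 ≤ aB v ∧ aB v ≤ 1)
    (hqA0 : 0 ≤ qA0) (hqA : qA0 ≤ qAB) (hqAB : qAB ≤ 1)
    (hqB0 : 0 ≤ qB0) (hqB : qB0 ≤ qBA) (hqBA : qBA ≤ 1)
    (hone : qB0 = qBA)
    (SB : Set V) :
    ∀ (SA : Set V) (v : V), v ∈ PhiA E aA aB qA0 qAB qB0 qBA SA SB →
      ∃ s ∈ SA, v ∈ PhiA E aA aB qA0 qAB qB0 qBA {s} SB := by
  intro SA
  suffices h : ∀ (b : Bool) (v : V), ComIC E aA aB qA0 qAB qB0 qBA SA SB b v →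
      b = true → ∃ s ∈ SA, ComIC E aA aB qA0 qAB qB0 qBA {s} SB true v by
    intro v hv; exact h true v hv rfl
  intro b v h
  induction h with
  | seedA hv => exact fun _ => ⟨_, hv, ComIC.seedA rfl⟩
  | seedB hv => intro h; exact absurd h (by simp)
  | stepA0 _ he hle ih =>
      intro _
      obtain ⟨s, hs, hcs⟩ := ih rfl
      exact ⟨s, hs, ComIC.stepA0 hcs he hle⟩
  | stepAB hu he hle hb ih _ =>
      intro _
      obtain ⟨s, hs, hcs⟩ := ih rfl
      exact ⟨s, hs, ComIC.stepAB hcs he hle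
        (comIC_B_indep E aA aB qA0 qAB qB0 qBA hone SA {s} SB false _ hb rfl)⟩
  | stepB0 _ _ _ _ => intro h; exact absurd h (by simp)
  | stepBA _ _ _ _ _ _ => intro h; exact absurd h (by simp)
end
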